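/- arXiv:1904.04218 — 5 statements merged into one kernel-verified Lean document; each statement's English description precedes it below -/
import Mathlib

section
/- If G is a dm×dm real positive semidefinite symmetric matrix with rank(G) ≤ d, whose m diagonal d×d blocks are all equal to the d×d identity matrix, and whose m−1 superdiagonal blocks G_{i,i+1} all lie in SO(d), then there exist rotation matrices R_1,…,R_m ∈ SO(d) such that the (i,j)-th d×d block of G equals R_iᵀ R_j for all i,j ∈ [m]. -/
/-!
Write `G = Bᴴ B` and let `Bᵢ` be the `i`-th column block of `B`, so that `G_{ij} = Bᵢᴴ Bⱼ` and each
`Bᵢ` is an isometry. The range of `B₀` has dimension `d ≥ rank B`, hence it is the whole range of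
`B`, on which `B₀ B₀ᴴ` acts as the identity. Therefore `Rᵢ := B₀ᴴ Bᵢ` satisfies
`Rᵢᴴ Rⱼ = Bᵢᴴ B₀ B₀ᴴ Bⱼ = G_{ij}`, with `R₀ = 1`. Finally `det R_{i+1} = det R_i · det G_{i,i+1}`
propagates `det = 1` along the superdiagonal.
-/

open Matrix

namespace Matrix

theorem mul_mul_eq_of_range_le_of_rank_le {n κ l K : Type*} [Fintype n] [Fintype κ] [Fintype l]
    [DecidableEq κ] [Field K] {A : Matrix n κ K} {L : Matrix κ n K} {C : Matrix n l K}
    (hLA : L * A = 1) (hrange : LinearMap.range A.mulVecLin ≤ LinearMap.range C.mulVecLin)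
    (hrank : C.rank ≤ Fintype.card κ) : A * L * C = C := by
  classical
  have hinj : Function.Injective A.mulVecLin := fun x y hxy => by
    simpa [mulVec_mulVec, hLA] using congrArg (L *ᵥ ·) hxy
  have hfinrank : Module.finrank K (LinearMap.range A.mulVecLin) = Fintype.card κ := by
    rw [LinearMap.finrank_range_of_inj hinj, Module.finrank_fintype_fun_eq_card]
  have hrange_eq := Submodule.eq_of_le_of_finrank_le hrange (hfinrank ▸ hrank)
  refine ext_of_mulVec_single fun j => ?_
  obtain ⟨w, hw⟩ : C *ᵥ Pi.single j 1 ∈ LinearMap.range A.mulVecLin :=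
    hrange_eq ▸ LinearMap.mem_range_self _ _
  rw [← mulVec_mulVec, ← hw, mulVecLin_apply, mulVec_mulVec, Matrix.mul_assoc, hLA,
    Matrix.mul_one]

open scoped MatrixOrder ComplexOrder in
theorem PosSemidef.exists_eq_conjTranspose_mul_of_rank_le {ι κ 𝕜 : Type*} [RCLike 𝕜]
    [Fintype ι] [Fintype κ] [DecidableEq κ] {G : Matrix (ι × κ) (ι × κ) 𝕜} (hG : G.PosSemidef)
    (hrank : G.rank ≤ Fintype.card κ) (hdiag : ∀ i, G.submatrix (Prod.mk i) (Prod.mk i) = 1)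
    (i₀ : ι) :
    ∃ R : ι → Matrix κ κ 𝕜, R i₀ = 1 ∧
      ∀ i j, G.submatrix (Prod.mk i) (Prod.mk j) = (R i)ᴴ * R j := by
  classical
  obtain ⟨B, rfl⟩ := CStarAlgebra.nonneg_iff_eq_star_mul_self.mp hG.nonneg
  set A : ι → Matrix (ι × κ) κ 𝕜 := fun i => B.submatrix id (Prod.mk i)
  have hblock : ∀ i j, (star B * B).submatrix (Prod.mk i) (Prod.mk j) = (A i)ᴴ * A j :=
    fun i j => submatrix_mul _ _ _ id _ Function.bijective_id
  have hA : (A i₀)ᴴ * A i₀ = 1 := (hblock i₀ i₀).symm.trans (hdiag i₀)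
  have hrange : LinearMap.range (A i₀).mulVecLin ≤ LinearMap.range B.mulVecLin := by
    rw [show A i₀ = B * (1 : Matrix (ι × κ) (ι × κ) 𝕜).submatrix id (Prod.mk i₀) from
      (mul_submatrix_one (Equiv.refl _) _ B).symm, mulVecLin_mul]
    exact LinearMap.range_comp_le_range _ _
  have hproj : A i₀ * (A i₀)ᴴ * B = B := mul_mul_eq_of_range_le_of_rank_le hA hrange <| by
    rwa [← rank_conjTranspose_mul_self]
  refine ⟨fun i => (A i₀)ᴴ * A i, hA, fun i j => ?_⟩
  calc (star B * B).submatrix (Prod.mk i) (Prod.mk j) = (A i)ᴴ * (A i₀ * (A i₀)ᴴ * A j) := by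
        rw [hblock]; congr 1; exact (congrArg (·.submatrix id (Prod.mk j)) hproj).symm
    _ = ((A i₀)ᴴ * A i)ᴴ * ((A i₀)ᴴ * A j) := by
        simp only [conjTranspose_mul, conjTranspose_conjTranspose, Matrix.mul_assoc]

theorem det_eq_one_of_det_transpose_mul_succ {K n : Type*} [CommRing K] [Fintype n]
    [DecidableEq n] {m : ℕ} {R : Fin m → Matrix n n K} (h₀ : ∀ h : 0 < m, (R ⟨0, h⟩).det = 1)
    (hsucc : ∀ (i : Fin m) (h : (i : ℕ) + 1 < m), ((R i)ᵀ * R ⟨i + 1, h⟩).det = 1) (i : Fin m) :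
    (R i).det = 1 := by
  obtain ⟨k, hk⟩ := i
  induction k with
  | zero => exact h₀ hk
  | succ k ih =>
    have h := hsucc ⟨k, by omega⟩ hk
    rwa [det_mul, det_transpose, ih, one_mul] at h

end Matrix

theorem stmt0_general (d m : ℕ) (hm : 1 ≤ m)
    (G : Matrix (Fin m × Fin d) (Fin m × Fin d) ℝ)
    (hpsd : G.PosSemidef)
    (hrank : G.rank ≤ d)
    (hdiag : ∀ i : Fin m, (fun p q : Fin d => G (i, p) (i, q)) = (1 : Matrix (Fin d) (Fin d) ℝ))
    (hsup : ∀ i : Fin m, ∀ h : (i : ℕ) + 1 < m,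
      (Matrix.of fun p q : Fin d => G (i, p) (⟨(i : ℕ) + 1, h⟩, q))ᵀ *
        (Matrix.of fun p q : Fin d => G (i, p) (⟨(i : ℕ) + 1, h⟩, q)) = 1 ∧
      (Matrix.of fun p q : Fin d => G (i, p) (⟨(i : ℕ) + 1, h⟩, q)).det = 1) :
    ∃ R : Fin m → Matrix (Fin d) (Fin d) ℝ,
      (∀ i, (R i)ᵀ * R i = 1 ∧ (R i).det = 1) ∧
      (∀ i j : Fin m, ∀ p q : Fin d, G (i, p) (j, q) = ((R i)ᵀ * R j) p q) := by
  obtain ⟨R, hR₀, hR⟩ :=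
    hpsd.exists_eq_conjTranspose_mul_of_rank_le (by simpa using hrank) hdiag ⟨0, hm⟩
  simp only [conjTranspose_eq_transpose_of_trivial] at hR
  refine ⟨R, fun i => ⟨(hR i i).symm.trans (hdiag i), ?_⟩, fun i j p q => congrFun₂ (hR i j) p q⟩
  refine det_eq_one_of_det_transpose_mul_succ (fun _ => hR₀ ▸ det_one) (fun i h => ?_) i
  exact hR i ⟨i + 1, h⟩ ▸ (hsup i h).2

theorem stmt0 (d m : ℕ) (hd : 1 ≤ d) (hm : 1 ≤ m)
    (G : Matrix (Fin m × Fin d) (Fin m × Fin d) ℝ)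
    (hpsd : G.PosSemidef)
    (hrank : G.rank ≤ d)
    (hdiag : ∀ i : Fin m, (fun p q : Fin d => G (i, p) (i, q)) = (1 : Matrix (Fin d) (Fin d) ℝ))
    (hsup : ∀ i : Fin m, ∀ h : (i : ℕ) + 1 < m,
      (Matrix.of fun p q : Fin d => G (i, p) (⟨(i : ℕ) + 1, h⟩, q))ᵀ *
        (Matrix.of fun p q : Fin d => G (i, p) (⟨(i : ℕ) + 1, h⟩, q)) = 1 ∧
      (Matrix.of fun p q : Fin d => G (i, p) (⟨(i : ℕ) + 1, h⟩, q)).det = 1) :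
    ∃ R : Fin m → Matrix (Fin d) (Fin d) ℝ,
      (∀ i, (R i)ᵀ * R i = 1 ∧ (R i).det = 1) ∧
      (∀ i j : Fin m, ∀ p q : Fin d, G (i, p) (j, q) = ((R i)ᵀ * R j) p q) :=
  stmt0_general d m hm G hpsd hrank hdiag hsup
end

section
/- Let A be an n×n real symmetric matrix with spectral decomposition A = Σ_{i=1}^n λ_i u_i u_iᵀ, where λ_1 ≥ ⋯ ≥ λ_n and (u_i) is an orthonormal eigenbasis. Then B = Σ_{i=1}^d max(λ_i, 0) u_i u_iᵀ minimizes ‖X − A‖_F over all symmetric positive semidefinite X with rank(X) ≤ d. -/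
/-!
Conjugating by the orthogonal matrix `U` with rows `u i` preserves the Frobenius norm and turns
`A`, `B`, `X` into `diag λ`, `diag ν` and a positive semidefinite `Y` of rank at most `d`, where
`ν` keeps `λᵢ⁺` for `i < d` and vanishes elsewhere. As `Y` has a nonnegative diagonal,
`‖Y - diag λ‖² ≥ ‖Y - diag λ⁺‖² + ∑ (λᵢ⁻)²`. Projecting the standard basis onto `ker Y`, of
dimension at least `n - d`, gives weights `qᵢ ∈ [0, 1]` with `∑ qᵢ ≥ n - d` and
`‖Y - diag λ⁺‖² ≥ ∑ (λᵢ⁺)² qᵢ`; this is at least the sum of the `n - d` smallest `(λᵢ⁺)²`, namely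
`∑_{i ≥ d} (λᵢ⁺)²`. Both bounds together are exactly `‖diag ν - diag λ‖²`.
-/

open Matrix Finset

noncomputable def frobNorm {n : ℕ} (A : Matrix (Fin n) (Fin n) ℝ) : ℝ :=
  Real.sqrt (∑ i, ∑ j, (A i j) ^ 2)

section
variable {ι κ : Type*} [Fintype ι] [Fintype κ]

noncomputable def frobSq (M : Matrix ι κ ℝ) : ℝ := ∑ i, ∑ j, M i j ^ 2

lemma frobSq_eq_trace (M : Matrix ι κ ℝ) : frobSq M = trace (M * Mᵀ) := by
  simp [frobSq, trace, mul_apply, sq]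

lemma frobSq_transpose (M : Matrix ι κ ℝ) : frobSq Mᵀ = frobSq M := Finset.sum_comm

lemma frobSq_mul_of_mul_transpose_eq_one [DecidableEq κ] {W : Matrix κ κ ℝ} (hW : W * Wᵀ = 1)
    (M : Matrix ι κ ℝ) : frobSq (M * W) = frobSq M := by
  rw [frobSq_eq_trace, frobSq_eq_trace, transpose_mul, Matrix.mul_assoc, ← Matrix.mul_assoc W, hW,
    Matrix.one_mul]

lemma frobSq_transpose_mul_mul [DecidableEq κ] {W : Matrix κ κ ℝ} (hW : W * Wᵀ = 1)
    (M : Matrix κ κ ℝ) : frobSq (Wᵀ * M * W) = frobSq M := by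
  rw [frobSq_mul_of_mul_transpose_eq_one hW, ← frobSq_transpose, transpose_mul,
    transpose_transpose, frobSq_mul_of_mul_transpose_eq_one hW, frobSq_transpose]

lemma frobSq_sub_transpose_mul_mul [DecidableEq κ] {W : Matrix κ κ ℝ} (hW : W * Wᵀ = 1)
    (X M : Matrix κ κ ℝ) : frobSq (X - Wᵀ * M * W) = frobSq (W * X * Wᵀ - M) := by
  have hWtW : Wᵀ * W = 1 := mul_eq_one_comm.mp hW
  rw [← frobSq_transpose_mul_mul hW (W * X * Wᵀ - M), Matrix.mul_sub, Matrix.sub_mul,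
    show Wᵀ * (W * X * Wᵀ) * W = X by
      simp only [← Matrix.mul_assoc, hWtW, Matrix.one_mul]
      rw [Matrix.mul_assoc, hWtW, Matrix.mul_one]]

lemma sum_sq_row_eq_one [DecidableEq κ] {W : Matrix κ κ ℝ} (hW : W * Wᵀ = 1) (i : κ) :
    ∑ j, W i j ^ 2 = 1 := by
  simpa [mul_apply, sq] using congrFun (congrFun hW i) i

lemma sum_sq_col_eq_one [DecidableEq κ] {W : Matrix κ κ ℝ} (hW : W * Wᵀ = 1) (j : κ) :
    ∑ i, W i j ^ 2 = 1 :=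
  sum_sq_row_eq_one (W := Wᵀ) (by rw [transpose_transpose, mul_eq_one_comm.mp hW]) j

lemma frobSq_diagonal [DecidableEq ι] (f : ι → ℝ) : frobSq (diagonal f) = ∑ i, f i ^ 2 := by
  refine sum_congr rfl fun i _ => ?_
  rw [sum_eq_single i (fun j _ hj => by simp [diagonal_apply_ne' _ hj]) (by simp),
    diagonal_apply_eq]

lemma frobSq_sub_diagonal [DecidableEq ι] (Y : Matrix ι ι ℝ) (f : ι → ℝ) :
    frobSq (Y - diagonal f) = frobSq Y + ∑ i, ((Y i i - f i) ^ 2 - Y i i ^ 2) := by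
  rw [← sub_eq_iff_eq_add', frobSq, frobSq, ← sum_sub_distrib]
  refine sum_congr rfl fun i _ => ?_
  rw [← sum_sub_distrib,
    sum_eq_single i (fun j _ hj => by simp [diagonal_apply_ne' _ hj]) (by simp)]
  simp

lemma sq_sub_max_add_sq_min_le {y l : ℝ} (hy : 0 ≤ y) :
    (y - max l 0) ^ 2 + min l 0 ^ 2 ≤ (y - l) ^ 2 := by
  rcases le_total 0 l with h | h
  · simp [max_eq_left h, min_eq_right h]
  · rw [max_eq_right h, min_eq_left h]; nlinarith

lemma frobSq_sub_diagonal_max_zero_add_le [DecidableEq ι] {Y : Matrix ι ι ℝ}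
    (hY : ∀ i, 0 ≤ Y i i) (f : ι → ℝ) :
    frobSq (Y - diagonal fun i => max (f i) 0) + ∑ i, min (f i) 0 ^ 2 ≤
      frobSq (Y - diagonal f) := by
  rw [frobSq_sub_diagonal, frobSq_sub_diagonal, add_assoc, ← sum_add_distrib]
  gcongr with i
  linarith [sq_sub_max_add_sq_min_le (l := f i) (hY i)]

lemma sum_le_sum_mul_of_card_le_sum {m q : ι → ℝ} {S : Finset ι} (hm : ∀ i, 0 ≤ m i)
    (hmS : ∀ i ∈ S, ∀ j ∉ S, m i ≤ m j) (hq0 : ∀ i, 0 ≤ q i) (hq1 : ∀ i, q i ≤ 1)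
    (hq : (S.card : ℝ) ≤ ∑ i, q i) :
    ∑ i ∈ S, m i ≤ ∑ i, m i * q i := by
  classical
  rcases S.eq_empty_or_nonempty with rfl | hS
  · simpa using sum_nonneg fun i _ => mul_nonneg (hm i) (hq0 i)
  set t := S.sup' hS m
  have hin : ∑ i ∈ S, m i * (1 - q i) ≤ ∑ i ∈ S, t * (1 - q i) :=
    sum_le_sum fun i hi => mul_le_mul_of_nonneg_right (le_sup' m hi) (by linarith [hq1 i])
  have hout : ∑ i ∈ Sᶜ, t * q i ≤ ∑ i ∈ Sᶜ, m i * q i :=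
    sum_le_sum fun j hj => mul_le_mul_of_nonneg_right
      (sup'_le hS m fun i hi => hmS i hi j (mem_compl.mp hj)) (hq0 j)
  have ht : 0 ≤ t := (hm _).trans (le_sup' m hS.choose_spec)
  rw [← sum_add_sum_compl S] at hq ⊢
  simp only [mul_sub, mul_one, sum_sub_distrib, ← mul_sum, sum_const, nsmul_eq_mul] at hin hout
  nlinarith [mul_le_mul_of_nonneg_left hq ht]

lemma sum_sq_le_frobSq_sub_diagonal [DecidableEq ι] {Y : Matrix ι ι ℝ} (hY : Y.IsHermitian)
    {μ : ι → ℝ} {S : Finset ι} (hμS : ∀ i ∈ S, ∀ j ∉ S, μ i ^ 2 ≤ μ j ^ 2)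
    (hcard : S.card + Y.rank ≤ Fintype.card ι) :
    ∑ i ∈ S, μ i ^ 2 ≤ frobSq (Y - diagonal μ) := by
  set W : Matrix ι ι ℝ := (hY.eigenvectorUnitary : Matrix ι ι ℝ)
  set e := hY.eigenvalues
  set Z := univ.filter (e · = 0)
  have hWWt : W * Wᵀ = 1 := (mem_orthogonalGroup_iff ι ℝ).mp hY.eigenvectorUnitary.2
  have hYW (i j : ι) : (Y * W) i j = e j * W i j := by
    simpa [W, e, mul_apply, mulVec, dotProduct] using congrFun (hY.mulVec_eigenvectorBasis j) i
  have hZ : S.card ≤ Z.card := by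
    have : Y.rank + Z.card = Fintype.card ι := by
      rw [hY.rank_eq_card_non_zero_eigs, Fintype.card_subtype, add_comm,
        card_filter_add_card_filter_not, card_univ]
    omega
  -- `q i` is the squared length of the projection of the `i`-th basis vector onto `ker Y`.
  set q : ι → ℝ := fun i => ∑ j ∈ Z, W i j ^ 2
  have hq1 (i : ι) : q i ≤ 1 := by
    rw [← sum_sq_row_eq_one hWWt i]
    exact sum_le_sum_of_subset_of_nonneg (filter_subset _ _) fun _ _ _ => sq_nonneg _
  have hqsum : ∑ i, q i = Z.card := by
    rw [sum_comm, sum_congr rfl fun j _ => sum_sq_col_eq_one hWWt j, sum_const, nsmul_one]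
  have hq : ∑ i, μ i ^ 2 * q i ≤ frobSq (Y - diagonal μ) := by
    rw [← frobSq_mul_of_mul_transpose_eq_one hWWt]
    refine sum_le_sum fun i _ => ?_
    rw [mul_sum]
    refine (sum_le_sum fun j hj => le_of_eq ?_).trans
      (sum_le_sum_of_subset_of_nonneg (filter_subset _ _) fun _ _ _ => sq_nonneg _)
    rw [sub_mul, Matrix.sub_apply, hYW, (mem_filter.mp hj).2, diagonal_mul]
    ring
  refine (sum_le_sum_mul_of_card_le_sum (fun i => sq_nonneg (μ i)) hμS
    (fun i => sum_nonneg fun _ _ => sq_nonneg _) hq1 ?_).trans hq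
  rw [hqsum]
  exact_mod_cast hZ

lemma frobSq_diagonal_truncate_sub [DecidableEq ι] (S : Finset ι) (l : ι → ℝ) :
    frobSq (diagonal (fun i => if i ∈ S then 0 else max (l i) 0) - diagonal l) =
      ∑ i ∈ S, max (l i) 0 ^ 2 + ∑ i, min (l i) 0 ^ 2 := by
  rw [diagonal_sub, frobSq_diagonal, ← Fintype.sum_ite_mem S, ← sum_add_distrib]
  refine sum_congr rfl fun i _ => ?_
  split_ifs <;> rcases le_total 0 (l i) with h | h <;> simp [h]

lemma frobSq_diagonal_truncate_sub_le [DecidableEq ι] {Y : Matrix ι ι ℝ} (hY : Y.PosSemidef)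
    {S : Finset ι} {l : ι → ℝ} (hl : ∀ i ∈ S, ∀ j ∉ S, l i ≤ l j)
    (hcard : S.card + Y.rank ≤ Fintype.card ι) :
    frobSq (diagonal (fun i => if i ∈ S then 0 else max (l i) 0) - diagonal l) ≤
      frobSq (Y - diagonal l) := by
  have hmax : ∀ i ∈ S, ∀ j ∉ S, max (l i) 0 ^ 2 ≤ max (l j) 0 ^ 2 := fun i hi j hj =>
    pow_le_pow_left₀ (le_max_right _ _) (max_le_max_right 0 (hl i hi j hj)) 2
  have hker := sum_sq_le_frobSq_sub_diagonal hY.isHermitian hmax hcard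
  have hneg := frobSq_sub_diagonal_max_zero_add_le (fun i => hY.diag_nonneg) l
  rw [frobSq_diagonal_truncate_sub]
  linarith

end

lemma sum_smul_vecMulVec_eq {ι κ : Type*} [Fintype κ] [DecidableEq κ] (u : κ → ι → ℝ)
    (f : κ → ℝ) :
    ∑ k, f k • vecMulVec (u k) (u k) = (of u)ᵀ * diagonal f * of u := by
  ext i j
  rw [Matrix.sum_apply, mul_apply]
  simp only [Matrix.smul_apply, vecMulVec_apply, mul_diagonal, transpose_apply, of_apply,
    smul_eq_mul]
  exact sum_congr rfl fun k _ => by ring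

lemma card_filter_le_val_le (n d : ℕ) :
    (univ.filter fun i : Fin n => d ≤ (i : ℕ)).card ≤ n - d :=
  calc _ ≤ (Ico d n).card :=
        card_le_card_of_injOn (↑) (fun i hi => by simp at hi ⊢; omega) Fin.val_injective.injOn
    _ = n - d := Nat.card_Ico d n

theorem stmt5_general (n d : ℕ) (hdn : d ≤ n)
    (A : Matrix (Fin n) (Fin n) ℝ)
    (lam : Fin n → ℝ) (u : Fin n → Fin n → ℝ)
    (hsort : ∀ i j : Fin n, i ≤ j → lam j ≤ lam i)
    (horth : ∀ i j : Fin n, u i ⬝ᵥ u j = if i = j then (1 : ℝ) else 0)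
    (hspec : A = ∑ i : Fin n, lam i • Matrix.vecMulVec (u i) (u i))
    (B : Matrix (Fin n) (Fin n) ℝ)
    (hB : B = ∑ i ∈ Finset.univ.filter (fun i : Fin n => (i : ℕ) < d),
      max (lam i) 0 • Matrix.vecMulVec (u i) (u i)) :
    ∀ X : Matrix (Fin n) (Fin n) ℝ, X.IsSymm → X.PosSemidef → X.rank ≤ d →
      frobNorm (B - A) ≤ frobNorm (X - A) := by
  intro X _ hX hXrank
  set U : Matrix (Fin n) (Fin n) ℝ := of u
  set S := univ.filter fun i : Fin n => d ≤ (i : ℕ)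
  have hU : U * Uᵀ = 1 := by
    ext i j
    simpa [U, mul_apply, one_apply, dotProduct] using horth i j
  have hA : A = Uᵀ * diagonal lam * U := hspec.trans (sum_smul_vecMulVec_eq u lam)
  have hB' : B = Uᵀ * diagonal (fun i => if i ∈ S then 0 else max (lam i) 0) * U := by
    rw [hB, ← sum_smul_vecMulVec_eq, sum_filter]
    simp only [S, mem_filter, mem_univ, true_and, ← not_lt, ite_not, ite_smul, zero_smul]
  have hY : (U * X * Uᵀ).PosSemidef := by
    simpa [conjTranspose_eq_transpose_of_trivial] using hX.mul_mul_conjTranspose_same U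
  have hYrank : (U * X * Uᵀ).rank ≤ d :=
    ((rank_mul_le_left _ _).trans (rank_mul_le_right _ _)).trans hXrank
  have hsorted : ∀ i ∈ S, ∀ j ∉ S, lam i ≤ lam j := fun i hi j hj =>
    hsort j i (Fin.le_def.mpr (by simp [S] at hi hj; omega))
  refine Real.sqrt_le_sqrt ?_
  change frobSq (B - A) ≤ frobSq (X - A)
  rw [hB', hA, ← Matrix.sub_mul, ← Matrix.mul_sub, frobSq_transpose_mul_mul hU,
    frobSq_sub_transpose_mul_mul hU]
  have hS : S.card ≤ n - d := card_filter_le_val_le n d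
  exact frobSq_diagonal_truncate_sub_le hY hsorted (by rw [Fintype.card_fin]; omega)

theorem stmt5 (n d : ℕ) (hd : 1 ≤ d) (hdn : d ≤ n)
    (A : Matrix (Fin n) (Fin n) ℝ) (hA : A.IsSymm)
    (lam : Fin n → ℝ) (u : Fin n → Fin n → ℝ)
    (hsort : ∀ i j : Fin n, i ≤ j → lam j ≤ lam i)
    (horth : ∀ i j : Fin n, u i ⬝ᵥ u j = if i = j then (1 : ℝ) else 0)
    (hspec : A = ∑ i : Fin n, lam i • Matrix.vecMulVec (u i) (u i))
    (B : Matrix (Fin n) (Fin n) ℝ)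
    (hB : B = ∑ i ∈ Finset.univ.filter (fun i : Fin n => (i : ℕ) < d),
      max (lam i) 0 • Matrix.vecMulVec (u i) (u i)) :
    ∀ X : Matrix (Fin n) (Fin n) ℝ, X.IsSymm → X.PosSemidef → X.rank ≤ d →
      frobNorm (B - A) ≤ frobNorm (X - A) :=
  stmt5_general n d hdn A lam u hsort horth hspec B hB
end

section
/- Let A ∈ ℝ^{d×d}, and suppose X₀ ∈ SO(d) maximizes X ↦ trace(AᵀX) over SO(d). Then the matrix P = Aᵀ X₀ is symmetric. -/
/-!
Perturb the maximiser inside `SO(d)` along a one-parameter subgroup: for antisymmetric `M`,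
`X₀ * exp (t • M)` stays in `SO(d)`, so `t ↦ trace (P * exp (t • M))` is maximal at `t = 0` and its
derivative `trace (P * M)` vanishes. Testing this against `Eᵢⱼ - Eⱼᵢ` gives `Pⱼᵢ = Pᵢⱼ`.
-/

open Matrix NormedSpace

namespace Matrix

variable {n : Type*} [Fintype n] [DecidableEq n]

theorem transpose_eq_self_of_trace_mul_eq_zero {R : Type*} [CommRing R] {P : Matrix n n R}
    (h : ∀ M : Matrix n n R, Mᵀ = -M → trace (P * M) = 0) : Pᵀ = P := by
  ext i j
  have hskew : (single i j (1 : R) - single j i 1)ᵀ = -(single i j 1 - single j i 1) := by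
    rw [transpose_sub, transpose_single, transpose_single, neg_sub]
  have := h _ hskew
  simp only [mul_sub, trace_sub, trace_mul_single, MulOpposite.op_one, one_smul] at this
  exact sub_eq_zero.mp this

theorem transpose_exp_mul_exp_of_transpose_eq_neg {M : Matrix n n ℝ} (hM : Mᵀ = -M) :
    (exp M)ᵀ * exp M = 1 := by
  rw [← exp_transpose, hM, ← exp_add_of_commute _ _ (Commute.refl M).neg_left, neg_add_cancel,
    exp_zero]

theorem det_exp_nonneg (A : Matrix n n ℝ) : 0 ≤ (exp A).det := by
  have hsq : exp A = exp ((1 / 2 : ℝ) • A) * exp ((1 / 2 : ℝ) • A) := by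
    rw [← exp_add_of_commute _ _ (Commute.refl _), ← add_smul]
    norm_num
  rw [hsq, det_mul]
  exact mul_self_nonneg _

theorem det_exp_of_transpose_eq_neg {M : Matrix n n ℝ} (hM : Mᵀ = -M) : (exp M).det = 1 := by
  have hsq := congrArg det (transpose_exp_mul_exp_of_transpose_eq_neg hM)
  rw [det_mul, det_transpose, det_one] at hsq
  rcases mul_self_eq_one_iff.mp hsq with h | h
  · exact h
  · linarith [det_exp_nonneg M]

theorem specialOrthogonal_mul_exp_of_transpose_eq_neg {X M : Matrix n n ℝ} (hX : Xᵀ * X = 1 ∧ X.det = 1)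
    (hM : Mᵀ = -M) : (X * exp M)ᵀ * (X * exp M) = 1 ∧ (X * exp M).det = 1 := by
  refine ⟨?_, ?_⟩
  · rw [transpose_mul, Matrix.mul_assoc, ← Matrix.mul_assoc Xᵀ, hX.1, Matrix.one_mul,
      transpose_exp_mul_exp_of_transpose_eq_neg hM]
  · rw [det_mul, hX.2, det_exp_of_transpose_eq_neg hM, one_mul]

theorem trace_mul_eq_zero_of_trace_mul_exp_le {P M : Matrix n n ℝ}
    (hle : ∀ t : ℝ, trace (P * exp (t • M)) ≤ trace P) : trace (P * M) = 0 := by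
  let _ : NormedRing (Matrix n n ℝ) := Matrix.linftyOpNormedRing
  let _ : NormedAlgebra ℝ (Matrix n n ℝ) := Matrix.linftyOpNormedAlgebra
  let L : Matrix n n ℝ →L[ℝ] ℝ :=
    LinearMap.toContinuousLinearMap ((traceLinearMap n ℝ ℝ).comp (LinearMap.mulLeft ℝ P))
  have hderiv : HasDerivAt (fun t : ℝ => trace (P * exp (t • M))) (trace (P * M)) 0 := by
    have := L.hasFDerivAt.comp_hasDerivAt (0 : ℝ) (hasDerivAt_exp_smul_const M (0 : ℝ))
    rwa [zero_smul, exp_zero, one_mul] at this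
  have hmax : IsLocalMax (fun t : ℝ => trace (P * exp (t • M))) 0 :=
    Filter.Eventually.of_forall fun t => by simpa using hle t
  exact hmax.hasDerivAt_eq_zero hderiv

end Matrix

theorem stmt9 (d : ℕ) (A X₀ : Matrix (Fin d) (Fin d) ℝ)
    (hX₀ : X₀ᵀ * X₀ = 1 ∧ X₀.det = 1)
    (hmax : ∀ X : Matrix (Fin d) (Fin d) ℝ, Xᵀ * X = 1 ∧ X.det = 1 →
      Matrix.trace (Aᵀ * X) ≤ Matrix.trace (Aᵀ * X₀)) :
    (Aᵀ * X₀)ᵀ = Aᵀ * X₀ := by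
  refine transpose_eq_self_of_trace_mul_eq_zero fun M hM => ?_
  refine trace_mul_eq_zero_of_trace_mul_exp_le fun t => ?_
  have hskew : (t • M)ᵀ = -(t • M) := by rw [transpose_smul, hM, smul_neg]
  rw [Matrix.mul_assoc]
  exact hmax _ (specialOrthogonal_mul_exp_of_transpose_eq_neg hX₀ hskew)
end

section
/- Let A ∈ ℝ^{d×d} with singular value decomposition A = U diag(σ_1,…,σ_d) Vᵀ, where σ_1 ≥ ⋯ ≥ σ_d ≥ 0 and U, V ∈ O(d). Then X* = U diag(1,…,1, det(UVᵀ)) Vᵀ maximizes trace(AᵀX) over X ∈ SO(d), i.e., for all X ∈ SO(d), trace(AᵀX) ≤ σ_1 + ⋯ + σ_{d−1} + det(UVᵀ)·σ_d. -/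
/-!
With `W = Uᵀ X V`, which is orthogonal with `det W = det (U Vᵀ)`, the objective is
`trace (Aᵀ X) = ∑ σᵢ Wᵢᵢ`. Entries of an orthogonal matrix are at most `1`, and
`trace W ≤ d - 1 + det W`: if `det W = -1` then `-1` is an eigenvalue of `W`, and composing
`W` with the reflection in a unit eigenvector gives an orthogonal matrix whose trace is larger
by `2`.
Splitting `σᵢ = (σᵢ - σ_d) + σ_d` bounds the first part entrywise and the second by the trace.
-/

open Matrix Finset

namespace Matrix

variable {n : Type*} [Fintype n] [DecidableEq n]

section Householder

variable {R : Type*} [CommRing R]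

def householder (u : n → R) : Matrix n n R := 1 - (2 : R) • vecMulVec u u

lemma householder_mem_orthogonalGroup {u : n → R} (hu : u ⬝ᵥ u = 1) :
    householder u ∈ orthogonalGroup n R := by
  have hsq : vecMulVec u u * vecMulVec u u = vecMulVec u u := by
    rw [vecMulVec_mul_vecMulVec, hu, one_smul]
  rw [mem_orthogonalGroup_iff', householder, transpose_sub, transpose_smul, transpose_one,
    transpose_vecMulVec]
  have hexpand : ((1 : Matrix n n R) - (2 : R) • vecMulVec u u) * (1 - (2 : R) • vecMulVec u u)
      = 1 - (4 : R) • vecMulVec u u + (4 : R) • (vecMulVec u u * vecMulVec u u) := by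
    simp only [sub_mul, mul_sub, one_mul, mul_one, smul_mul_smul_comm, mul_smul]
    module
  rw [hexpand, hsq]; module

lemma trace_mul_householder (W : Matrix n n R) (u : n → R) :
    trace (W * householder u) = trace W - 2 * ((W *ᵥ u) ⬝ᵥ u) := by
  rw [householder, mul_sub, mul_one, Matrix.mul_smul, trace_sub, trace_smul, mul_vecMulVec,
    trace_vecMulVec, smul_eq_mul]

end Householder

lemma det_add_one_eq_zero_of_det_eq_neg_one {R : Type*} [CommRing R] [NoZeroDivisors R]
    [CharZero R] {W : Matrix n n R} (hW : W ∈ orthogonalGroup n R) (hdet : W.det = -1) :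
    (W + 1).det = 0 := by
  rw [mem_orthogonalGroup_iff'] at hW
  have h : Wᵀ * (W + 1) = (W + 1)ᵀ := by
    rw [mul_add, hW, mul_one, transpose_add, transpose_one, add_comm]
  have hdet' := congrArg det h
  rw [det_mul, det_transpose, det_transpose, hdet, neg_one_mul, neg_eq_iff_add_eq_zero] at hdet'
  exact add_self_eq_zero.mp hdet'

lemma diag_le_one_of_mem_orthogonalGroup {W : Matrix n n ℝ} (hW : W ∈ orthogonalGroup n ℝ)
    (i : n) : W i i ≤ 1 :=
  (le_abs_self _).trans (entry_norm_bound_of_unitary hW i i)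

lemma trace_le_card_of_mem_orthogonalGroup {W : Matrix n n ℝ} (hW : W ∈ orthogonalGroup n ℝ) :
    trace W ≤ Fintype.card n :=
  (sum_le_sum fun i _ => diag_le_one_of_mem_orthogonalGroup hW i).trans_eq (by simp)

lemma exists_mulVec_eq_neg_self_of_det_eq_neg_one {W : Matrix n n ℝ}
    (hW : W ∈ orthogonalGroup n ℝ) (hdet : W.det = -1) :
    ∃ u : n → ℝ, u ⬝ᵥ u = 1 ∧ W *ᵥ u = -u := by
  obtain ⟨v, hv0, hv⟩ :=
    exists_mulVec_eq_zero_iff.mpr (det_add_one_eq_zero_of_det_eq_neg_one hW hdet)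
  have hpos : 0 < v ⬝ᵥ v :=
    lt_of_le_of_ne' (Fintype.sum_nonneg fun i => mul_self_nonneg (v i))
      (dotProduct_self_eq_zero.not.mpr hv0)
  refine ⟨(√(v ⬝ᵥ v))⁻¹ • v, ?_, ?_⟩
  · rw [smul_dotProduct, dotProduct_smul, smul_eq_mul, smul_eq_mul, ← mul_assoc, ← mul_inv,
      Real.mul_self_sqrt hpos.le, inv_mul_cancel₀ hpos.ne']
  · have hWv : W *ᵥ v = -v := eq_neg_of_add_eq_zero_left (by simpa [add_mulVec] using hv)
    rw [mulVec_smul, hWv, smul_neg]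

lemma trace_le_card_sub_two_of_mem_orthogonalGroup {W : Matrix n n ℝ}
    (hW : W ∈ orthogonalGroup n ℝ) (hdet : W.det = -1) :
    trace W ≤ Fintype.card n - 2 := by
  obtain ⟨u, hu, hWu⟩ := exists_mulVec_eq_neg_self_of_det_eq_neg_one hW hdet
  have hreflect := trace_le_card_of_mem_orthogonalGroup
    (mul_mem hW (householder_mem_orthogonalGroup hu))
  rw [trace_mul_householder, hWu, neg_dotProduct, hu] at hreflect
  linarith

lemma trace_le_card_sub_one_add_det_of_mem_orthogonalGroup {W : Matrix n n ℝ}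
    (hW : W ∈ orthogonalGroup n ℝ) :
    trace W ≤ Fintype.card n - 1 + W.det := by
  have hdet : W.det * W.det = 1 := by
    simpa using congrArg det ((mem_orthogonalGroup_iff' n ℝ).mp hW)
  rcases mul_self_eq_one_iff.mp hdet with h | h
  · linarith [trace_le_card_of_mem_orthogonalGroup hW]
  · linarith [trace_le_card_sub_two_of_mem_orthogonalGroup hW h]

lemma sum_mul_diag_le_of_mem_orthogonalGroup {W : Matrix n n ℝ} (hW : W ∈ orthogonalGroup n ℝ)
    {σ : n → ℝ} {j : n} (hj : 0 ≤ σ j) (hmin : ∀ i, σ j ≤ σ i) :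
    ∑ i, σ i * W i i ≤ ∑ i, σ i - σ j + W.det * σ j := by
  have hsplit : ∑ i, σ i * W i i = ∑ i, (σ i - σ j) * W i i + σ j * trace W := by
    simp only [trace, diag, mul_sum, ← sum_add_distrib]
    exact sum_congr rfl fun i _ => by ring
  have hshift : ∑ i, (σ i - σ j) * W i i ≤ ∑ i, (σ i - σ j) := sum_le_sum fun i _ =>
    mul_le_of_le_one_right (sub_nonneg.2 (hmin i)) (diag_le_one_of_mem_orthogonalGroup hW i)
  have htrace :=
    mul_le_mul_of_nonneg_left (trace_le_card_sub_one_add_det_of_mem_orthogonalGroup hW) hj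
  rw [sum_sub_distrib, sum_const, card_univ, nsmul_eq_mul] at hshift
  linarith

lemma trace_transpose_mul_eq_sum_diag {R : Type*} [CommSemiring R] (U V X : Matrix n n R)
    (σ : n → R) : trace ((U * diagonal σ * Vᵀ)ᵀ * X) = ∑ i, σ i * (Uᵀ * X * V) i i := by
  rw [transpose_mul, transpose_mul, transpose_transpose, diagonal_transpose, Matrix.mul_assoc,
    Matrix.mul_assoc, trace_mul_comm, Matrix.mul_assoc, Matrix.mul_assoc]
  simp [trace, diagonal_mul]

end Matrix

lemma Finset.sum_ite_eq_sub_add {ι M : Type*} [Fintype ι] [DecidableEq ι] [CommRing M]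
    (f : ι → M) (j : ι) (c : M) :
    ∑ i, (if i = j then c * f i else f i) = ∑ i, f i - f j + c * f j := by
  rw [← add_sum_erase _ _ (mem_univ j), ← add_sum_erase _ _ (mem_univ j), if_pos rfl,
    sum_congr rfl fun i hi => if_neg (ne_of_mem_erase hi)]
  ring

theorem stmt12 (d : ℕ) (hd : 1 ≤ d)
    (A U V : Matrix (Fin d) (Fin d) ℝ) (sigma : Fin d → ℝ)
    (hU : Uᵀ * U = 1) (hV : Vᵀ * V = 1)
    (hnn : ∀ i, 0 ≤ sigma i)
    (hsort : ∀ i j : Fin d, i ≤ j → sigma j ≤ sigma i)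
    (hSVD : A = U * Matrix.diagonal sigma * Vᵀ) :
    ∀ X : Matrix (Fin d) (Fin d) ℝ, Xᵀ * X = 1 ∧ X.det = 1 →
      Matrix.trace (Aᵀ * X) ≤
        ∑ i : Fin d, (if (i : ℕ) = d - 1 then (U * Vᵀ).det * sigma i else sigma i) := by
  rintro X ⟨hX, hXdet⟩
  rw [← mem_orthogonalGroup_iff'] at hU hV hX
  have hW : Uᵀ * X * V ∈ orthogonalGroup (Fin d) ℝ :=
    mul_mem (mul_mem (transpose_mem_unitaryGroup_iff.mpr hU) hX) hV
  have hWdet : (Uᵀ * X * V).det = (U * Vᵀ).det := by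
    rw [det_mul, det_mul, det_mul, det_transpose, det_transpose, hXdet, mul_one]
  let last : Fin d := ⟨d - 1, by omega⟩
  have hlast : ∀ i : Fin d, ((i : ℕ) = d - 1) = (i = last) := fun i =>
    propext (Fin.ext_iff (b := last)).symm
  simp_rw [hlast]
  rw [hSVD, trace_transpose_mul_eq_sum_diag, sum_ite_eq_sub_add, ← hWdet]
  exact sum_mul_diag_le_of_mem_orthogonalGroup hW (hnn last) fun i =>
    hsort i last (Nat.le_sub_one_of_lt i.2)
end

section
/- Let Λ = diag(λ_1,…,λ_n) with λ_1 ≥ ⋯ ≥ λ_n ≥ 0, and let Γ = diag(μ_1,…,μ_n) with μ_1 ≥ ⋯ ≥ μ_n ≥ 0. Then for every K ∈ O(n), ‖K Γ Kᵀ − Λ‖_F ≥ ‖Γ − Λ‖_F, i.e., the minimum over orthogonal K is attained at K = I. -/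
/-!
Expanding the squares, and using that conjugation by an orthogonal `K` preserves the Frobenius
norm, the claim reduces to `∑ᵢ λᵢ (KΓKᵀ)ᵢᵢ ≤ ∑ᵢ λᵢ μᵢ`. Since `(KΓKᵀ)ᵢᵢ = ∑ⱼ Kᵢⱼ² μⱼ` and the
matrix `(Kᵢⱼ²)` is doubly stochastic, Birkhoff's theorem reduces this to permutation matrices,
where it is the rearrangement inequality for the similarly ordered `λ` and `μ`.
-/

open Matrix Finset

theorem Monovary.dotProduct_mulVec_le_of_mem_doublyStochastic {ι R : Type*} [Fintype ι]
    [DecidableEq ι] [Field R] [LinearOrder R] [IsStrictOrderedRing R] {f g : ι → R}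
    (hfg : Monovary f g) {P : Matrix ι ι R} (hP : P ∈ doublyStochastic R ι) :
    f ⬝ᵥ (P *ᵥ g) ≤ f ⬝ᵥ g := by
  let L : Matrix ι ι R →ₗ[R] R :=
    { toFun := fun P => f ⬝ᵥ (P *ᵥ g)
      map_add' := fun P Q => by simp only [add_mulVec, dotProduct_add]
      map_smul' := fun c P => by simp only [smul_mulVec, dotProduct_smul, RingHom.id_apply] }
  rw [← SetLike.mem_coe, doublyStochastic_eq_convexHull_permMatrix] at hP
  obtain ⟨_, ⟨σ, rfl⟩, hσ⟩ :=
    (L.convexOn convex_univ).exists_ge_of_mem_convexHull (Set.subset_univ _) hP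
  calc L P ≤ f ⬝ᵥ (g ∘ σ) := by simpa [L, permMatrix_mulVec] using hσ
    _ ≤ f ⬝ᵥ g := hfg.sum_mul_comp_perm_le_sum_mul

namespace Matrix

variable {ι R : Type*} [Fintype ι]

theorem map_sq_mem_doublyStochastic [DecidableEq ι] {K : Matrix ι ι ℝ} (hK : Kᵀ * K = 1) :
    K.map (· ^ 2) ∈ doublyStochastic ℝ ι := by
  have hK' : K * Kᵀ = 1 := mul_eq_one_comm.mp hK
  refine mem_doublyStochastic_iff_sum.mpr ⟨fun i j => sq_nonneg _, fun i => ?_, fun j => ?_⟩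
  · simpa [mul_apply, one_apply, sq] using congrFun (congrFun hK' i) i
  · simpa [mul_apply, one_apply, sq] using congrFun (congrFun hK j) j

theorem conj_diagonal_apply_self [DecidableEq ι] [CommSemiring R] (K : Matrix ι ι R)
    (d : ι → R) (i : ι) : (K * diagonal d * Kᵀ) i i = (K.map (· ^ 2) *ᵥ d) i := by
  rw [mul_apply]
  simp only [mul_diagonal, transpose_apply, mulVec, dotProduct, map_apply]
  exact Finset.sum_congr rfl fun j _ => by ring

theorem sum_sq_eq_trace_mul_transpose [CommSemiring R] (A : Matrix ι ι R) :
    ∑ i, ∑ j, A i j ^ 2 = trace (A * Aᵀ) := by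
  simp [trace, mul_apply, sq]

theorem sum_sq_conj_eq [DecidableEq ι] [CommSemiring R] {K : Matrix ι ι R} (hK : Kᵀ * K = 1)
    (A : Matrix ι ι R) : ∑ i, ∑ j, (K * A * Kᵀ) i j ^ 2 = ∑ i, ∑ j, A i j ^ 2 := by
  rw [sum_sq_eq_trace_mul_transpose, sum_sq_eq_trace_mul_transpose, transpose_mul,
    transpose_mul, transpose_transpose]
  calc trace (K * A * Kᵀ * (K * (Aᵀ * Kᵀ))) = trace (K * (A * Aᵀ) * Kᵀ) := by
        simp only [Matrix.mul_assoc, ← Matrix.mul_assoc Kᵀ K, hK, Matrix.one_mul]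
    _ = trace (A * Aᵀ) := by rw [trace_mul_cycle, ← Matrix.mul_assoc, hK, Matrix.one_mul]

theorem sum_sq_sub_diagonal [DecidableEq ι] [CommRing R] (A : Matrix ι ι R) (d : ι → R) :
    ∑ i, ∑ j, (A - diagonal d) i j ^ 2
      = ∑ i, ∑ j, A i j ^ 2 - 2 * ∑ i, A i i * d i + ∑ i, d i ^ 2 := by
  have (i j : ι) : (A - diagonal d) i j ^ 2
      = A i j ^ 2 - 2 * (A i j * diagonal d i j) + diagonal d i j ^ 2 := by
    rw [sub_apply]; ring
  simp only [this, Finset.sum_add_distrib, Finset.sum_sub_distrib, ← Finset.mul_sum]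
  simp [diagonal_apply, ite_pow]

end Matrix

theorem stmt17_general (n : ℕ) (lam mu : Fin n → ℝ)
    (hlamsort : ∀ i j : Fin n, i ≤ j → lam j ≤ lam i)
    (hmusort : ∀ i j : Fin n, i ≤ j → mu j ≤ mu i)
    (K : Matrix (Fin n) (Fin n) ℝ) (hK : Kᵀ * K = 1) :
    ∑ i, ∑ j, ((Matrix.diagonal mu - Matrix.diagonal lam) i j) ^ 2 ≤
      ∑ i, ∑ j, ((K * Matrix.diagonal mu * Kᵀ - Matrix.diagonal lam) i j) ^ 2 := by
  have hmono : Monovary lam mu := Antitone.monovary hlamsort hmusort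
  have hcross : ∑ i, (K.map (· ^ 2) *ᵥ mu) i * lam i ≤ ∑ i, mu i * lam i := by
    simpa only [dotProduct, mul_comm (lam _)] using
      hmono.dotProduct_mulVec_le_of_mem_doublyStochastic (map_sq_mem_doublyStochastic hK)
  rw [sum_sq_sub_diagonal, sum_sq_sub_diagonal, sum_sq_conj_eq hK]
  simp only [conj_diagonal_apply_self, diagonal_apply_eq]
  linarith

theorem stmt17 (n : ℕ) (lam mu : Fin n → ℝ)
    (hlamnn : ∀ i, 0 ≤ lam i) (hlamsort : ∀ i j : Fin n, i ≤ j → lam j ≤ lam i)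
    (hmunn : ∀ i, 0 ≤ mu i) (hmusort : ∀ i j : Fin n, i ≤ j → mu j ≤ mu i)
    (K : Matrix (Fin n) (Fin n) ℝ) (hK : Kᵀ * K = 1) :
    ∑ i, ∑ j, ((Matrix.diagonal mu - Matrix.diagonal lam) i j) ^ 2 ≤
      ∑ i, ∑ j, ((K * Matrix.diagonal mu * Kᵀ - Matrix.diagonal lam) i j) ^ 2 :=
  stmt17_general n lam mu hlamsort hmusort K hK
end
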